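/- arXiv:1607.02392 — 2 statements merged into one kernel-verified Lean document; each statement's English description precedes it below -/
import Mathlib

section
/- Let g : ℂ → [0,∞) be measurable, δ > 0, λ > 0, and suppose c(λ) := ∫ 1_{|x|≤δ} g(x)^{−λ} dℓ_ℂ(x) < ∞. Then for every ε > 0 and every n ∈ ℕ, ∫_{ℂ^{n+1}} 1{∏_{k=0}^n g(a_k) ≤ e^{−εn²}} · 1{max_{0≤k≤n} |a_k| < δ} dℓ_{ℂ^{n+1}}(a_0,…,a_n) ≤ e^{−λεn²} · c(λ)^{n+1}. -/
/-!
Chernoff's trick: on the set in question the function `a ↦ ∏ₖ 1_D(aₖ) g(aₖ)^(-λ)`, with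
`D = {|x| ≤ δ}`, is at least `e^{λεn²}`, so by Markov's inequality the set has measure at most
`e^{-λεn²}` times the integral of that function, which factorises by Fubini into `c(λ)^(n+1)`.
-/

open MeasureTheory
open scoped ENNReal

namespace MeasureTheory

variable {α : Type*} [MeasurableSpace α] {μ : Measure α} [SigmaFinite μ]

theorem lintegral_fin_nat_prod_eq_pow {f : α → ℝ≥0∞} (hf : Measurable f) (n : ℕ) :
    ∫⁻ a : Fin n → α, ∏ i, f (a i) ∂Measure.pi (fun _ ↦ μ) = (∫⁻ x, f x ∂μ) ^ n := by
  induction n with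
  | zero => simp
  | succ n ih =>
    calc _ = ∫⁻ p : α × (Fin n → α), f p.1 * ∏ i, f (p.2 i) ∂μ.prod (Measure.pi fun _ ↦ μ) := by
          rw [← ((measurePreserving_piFinSuccAbove (fun _ ↦ μ) 0).symm).lintegral_comp_emb
            (MeasurableEquiv.measurableEmbedding _)]
          simp_rw [MeasurableEquiv.piFinSuccAbove_symm_apply, Fin.insertNthEquiv,
            Fin.prod_univ_succ, Fin.insertNth_zero, Equiv.coe_fn_mk, Fin.cons_succ,
            Fin.cons_zero, cast_eq]
      _ = (∫⁻ x, f x ∂μ) ^ (n + 1) := by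
          have hprod : Measurable fun b : Fin n → α ↦ ∏ i, f (b i) := by fun_prop
          rw [lintegral_prod_mul hf.aemeasurable hprod.aemeasurable, ih, pow_succ']

theorem lintegral_fintype_prod_eq_pow {ι : Type*} [Fintype ι] {f : α → ℝ≥0∞}
    (hf : Measurable f) :
    ∫⁻ a : ι → α, ∏ i, f (a i) ∂Measure.pi (fun _ ↦ μ) =
      (∫⁻ x, f x ∂μ) ^ Fintype.card ι := by
  let e := (Fintype.equivFin ι).symm
  rw [← (measurePreserving_piCongrLeft (fun _ ↦ μ) e).lintegral_comp_emb
    (MeasurableEquiv.measurableEmbedding _)]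
  simp_rw [← e.prod_comp, MeasurableEquiv.coe_piCongrLeft, Equiv.piCongrLeft_apply_apply,
    lintegral_fin_nat_prod_eq_pow hf]

theorem measure_pi_prod_le_le_chernoff {ι : Type*} [Fintype ι] {g : α → ℝ} (hg : Measurable g)
    (hg_nonneg : ∀ x, 0 ≤ g x) {D : Set α} (hD : MeasurableSet D) {l t : ℝ} (hl : 0 ≤ l)
    (ht : 0 < t) :
    Measure.pi (fun _ : ι ↦ μ) {a | ∏ i, g (a i) ≤ t ∧ ∀ i, a i ∈ D} ≤
      ENNReal.ofReal (t ^ l) * (∫⁻ x in D, ENNReal.ofReal (g x) ^ (-l) ∂μ) ^ Fintype.card ι := by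
  set h : α → ℝ≥0∞ := D.indicator fun x ↦ ENNReal.ofReal (g x) ^ (-l)
  have hh : Measurable h := (hg.ennreal_ofReal.pow_const _).indicator hD
  have hsub : {a : ι → α | ∏ i, g (a i) ≤ t ∧ ∀ i, a i ∈ D} ⊆
      {a | ENNReal.ofReal (t ^ (-l)) ≤ ∏ i, h (a i)} := by
    rintro a ⟨hprod, hmem⟩
    have hprod' : ∏ i, ENNReal.ofReal (g (a i)) ≤ ENNReal.ofReal t := by
      rw [← ENNReal.ofReal_prod_of_nonneg fun i _ ↦ hg_nonneg _]
      exact ENNReal.ofReal_le_ofReal hprod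
    calc ENNReal.ofReal (t ^ (-l)) = ENNReal.ofReal t ^ (-l) := (ENNReal.ofReal_rpow_of_pos ht).symm
      _ ≤ (∏ i, ENNReal.ofReal (g (a i))) ^ (-l) := by
          rw [ENNReal.rpow_neg, ENNReal.rpow_neg]
          exact ENNReal.inv_le_inv.mpr (ENNReal.rpow_le_rpow hprod' hl)
      _ = ∏ i, h (a i) := by
          rw [← ENNReal.prod_rpow_of_ne_top fun i _ ↦ ENNReal.ofReal_ne_top]
          exact Finset.prod_congr rfl fun i _ ↦
            (Set.indicator_of_mem (hmem i) fun x ↦ ENNReal.ofReal (g x) ^ (-l)).symm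
  have ht_l : 0 < t ^ (-l) := Real.rpow_pos_of_pos ht _
  calc _ ≤ Measure.pi (fun _ : ι ↦ μ) {a | ENNReal.ofReal (t ^ (-l)) ≤ ∏ i, h (a i)} :=
        measure_mono hsub
    _ ≤ (∫⁻ a, ∏ i, h (a i) ∂Measure.pi fun _ ↦ μ) / ENNReal.ofReal (t ^ (-l)) :=
        meas_ge_le_lintegral_div
          (by fun_prop : Measurable fun a : ι → α ↦ ∏ i, h (a i)).aemeasurable
          (ENNReal.ofReal_pos.mpr ht_l).ne' ENNReal.ofReal_ne_top
    _ = _ := by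
        rw [lintegral_fintype_prod_eq_pow hh, lintegral_indicator hD, div_eq_mul_inv,
          ← ENNReal.ofReal_inv_of_pos ht_l, Real.rpow_neg ht.le, inv_inv, mul_comm]

end MeasureTheory

theorem chernoff_bound_complex_general (g : ℂ → ℝ) (hg_meas : Measurable g)
    (hg_nonneg : ∀ x, 0 ≤ g x) (δ l : ℝ) (hl : 0 < l) :
    ∀ ε > (0 : ℝ), ∀ n : ℕ,
      volume {a : Fin (n + 1) → ℂ |
          (∏ k, g (a k)) ≤ Real.exp (-ε * (n : ℝ) ^ 2) ∧ ∀ k, ‖a k‖ < δ}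
        ≤ ENNReal.ofReal (Real.exp (-l * ε * (n : ℝ) ^ 2)) *
            (∫⁻ x in {x : ℂ | ‖x‖ ≤ δ}, ENNReal.ofReal (g x) ^ (-l)) ^ (n + 1) := by
  intro ε _ n
  have hD : MeasurableSet {x : ℂ | ‖x‖ ≤ δ} := measurableSet_le measurable_norm measurable_const
  have hexp : Real.exp (-ε * (n : ℝ) ^ 2) ^ l = Real.exp (-l * ε * (n : ℝ) ^ 2) := by
    rw [← Real.exp_mul]
    ring_nf
  calc _ ≤ volume {a : Fin (n + 1) → ℂ |
          (∏ k, g (a k)) ≤ Real.exp (-ε * (n : ℝ) ^ 2) ∧ ∀ k, a k ∈ {x : ℂ | ‖x‖ ≤ δ}} :=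
        measure_mono fun a ha ↦ ⟨ha.1, fun k ↦ (ha.2 k).le⟩
    _ ≤ _ := by
        have := measure_pi_prod_le_le_chernoff (μ := volume) (ι := Fin (n + 1)) hg_meas hg_nonneg hD hl.le
          (Real.exp_pos (-ε * (n : ℝ) ^ 2))
        rwa [Fintype.card_fin, hexp, ← volume_pi] at this

/-- Chernoff-type bound: if `c(λ) = ∫_{|x|≤δ} g(x)^{−λ} dℓ_ℂ(x) < ∞` for a fixed `λ > 0`,
then for every `ε > 0` and every `n`, the Lebesgue measure of the set of coefficient vectors
`a ∈ ℂ^{n+1}` with `∏_k g(a_k) ≤ e^{−εn²}` and `max_k |a_k| < δ` is at most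
`e^{−λεn²} c(λ)^{n+1}`. -/
theorem chernoff_bound_complex (g : ℂ → ℝ) (hg_meas : Measurable g)
    (hg_nonneg : ∀ x, 0 ≤ g x) (δ l : ℝ) (hδ : 0 < δ) (hl : 0 < l)
    (hc : ∫⁻ x in {x : ℂ | ‖x‖ ≤ δ}, ENNReal.ofReal (g x) ^ (-l) < ⊤) :
    ∀ ε > (0 : ℝ), ∀ n : ℕ,
      volume {a : Fin (n + 1) → ℂ |
          (∏ k, g (a k)) ≤ Real.exp (-ε * (n : ℝ) ^ 2) ∧ ∀ k, ‖a k‖ < δ}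
        ≤ ENNReal.ofReal (Real.exp (-l * ε * (n : ℝ) ^ 2)) *
            (∫⁻ x in {x : ℂ | ‖x‖ ≤ δ}, ENNReal.ofReal (g x) ^ (-l)) ^ (n + 1) :=
  chernoff_bound_complex_general g hg_meas hg_nonneg δ l hl
end

section
/- Let ρ > 0, r > 0, R > 0 and let g : ℂ → [0,∞) be measurable with g(x) ≤ exp(−r|x|^ρ + R) for all x ∈ ℂ. Set γ_n = min(1, (n+1)^{1/ρ − 1/2}). Then for every n ≥ 1 and every z = (z_1,…,z_n) ∈ ℂⁿ, ∫_ℂ (∏_{i<j} |z_i − z_j|²) |a|^{2n} ∏_{k=0}^n g(a·ã_k(z)) dℓ_ℂ(a) ≤ e^{(n+1)R} · γ_n^{−(2n+2)} · (∏_{i<j} |z_i − z_j|² / ‖ã(z)‖_2^{2n+2}) · ∫_ℂ |u|^{2n} e^{−r|u|^ρ} dℓ_ℂ(u). -/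
/-!
Bounding `g` by its tail estimate gives
`∏ₖ g(a ãₖ) ≤ e^{(n+1)R} exp(-r |a|^ρ ∑ₖ |ãₖ|^ρ)`, and `∑ₖ |ãₖ|^ρ ≥ (γₙ ‖ã‖₂)^ρ`
(subadditivity of `t ↦ t^{ρ/2}` when `ρ ≤ 2`, the power mean inequality when `ρ ≥ 2`).
With `c = γₙ ‖ã‖₂ > 0` (the leading coefficient of `ã` is `1`) the integrand is thus at most
`vand · e^{(n+1)R} c^{-2n} F(c a)` with `F(u) = |u|^{2n} e^{-r|u|^ρ}`, and the substitution
`u = c a` in the real plane `ℂ` contributes the remaining factor `c^{-2}`.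
-/

open MeasureTheory Filter Polynomial
open scoped ENNReal

noncomputable section

/-- `ã(z)`: the coefficient vector of the monic polynomial `∏ (X − z_i)`. -/
def atil (n : ℕ) (z : Fin n → ℂ) : Fin (n + 1) → ℂ :=
  fun k => (∏ i, (Polynomial.X - Polynomial.C (z i))).coeff (k : ℕ)

/-- The squared Vandermonde factor `∏_{i<j} |z_i − z_j|²`. -/
def vand (n : ℕ) (z : Fin n → ℂ) : ℝ :=
  ∏ p ∈ Finset.univ.filter (fun p : Fin n × Fin n => p.1 < p.2),
    ‖z p.1 - z p.2‖ ^ 2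

namespace Real

theorem rpow_sum_le_sum_rpow {ι : Type*} (s : Finset ι) {x : ι → ℝ} (hx : ∀ i ∈ s, 0 ≤ x i)
    {t : ℝ} (ht : 0 < t) (ht1 : t ≤ 1) : (∑ i ∈ s, x i) ^ t ≤ ∑ i ∈ s, x i ^ t := by
  classical
  induction s using Finset.induction_on with
  | empty => simp [zero_rpow ht.ne']
  | insert a s ha ih =>
    rw [Finset.forall_mem_insert] at hx
    rw [Finset.sum_insert ha, Finset.sum_insert ha]
    calc (x a + ∑ i ∈ s, x i) ^ t ≤ x a ^ t + (∑ i ∈ s, x i) ^ t :=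
          rpow_add_le_add_rpow hx.1 (Finset.sum_nonneg hx.2) ht.le ht1
      _ ≤ x a ^ t + ∑ i ∈ s, x i ^ t := by gcongr; exact ih hx.2

theorem min_one_card_rpow_mul_sum_rpow_rpow_le_sum_rpow {ι : Type*} [Fintype ι] [Nonempty ι]
    {p q : ℝ} (hp : 0 < p) (hq : 0 < q) {x : ι → ℝ} (hx : ∀ i, 0 ≤ x i) :
    (min 1 ((Fintype.card ι : ℝ) ^ (1 / p - 1 / q)) * (∑ i, x i ^ q) ^ (1 / q)) ^ p
      ≤ ∑ i, x i ^ p := by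
  set m : ℝ := (Fintype.card ι : ℝ)
  have hm : 0 < m := Nat.cast_pos.2 Fintype.card_pos
  set γ := min 1 (m ^ (1 / p - 1 / q))
  have hγ : 0 ≤ γ := le_min zero_le_one (rpow_nonneg hm.le _)
  have hxq : ∀ i ∈ Finset.univ, 0 ≤ x i ^ q := fun i _ => rpow_nonneg (hx i) q
  have hS : 0 ≤ (∑ i, x i ^ q) ^ (p / q) := rpow_nonneg (Finset.sum_nonneg hxq) _
  have hpow : ∀ i, (x i ^ q) ^ (p / q) = x i ^ p := fun i => by
    rw [← rpow_mul (hx i), mul_div_cancel₀ p hq.ne']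
  rw [mul_rpow hγ (rpow_nonneg (Finset.sum_nonneg hxq) _), ← rpow_mul (Finset.sum_nonneg hxq),
    one_div_mul_eq_div]
  rcases le_total p q with hpq | hqp
  · calc γ ^ p * (∑ i, x i ^ q) ^ (p / q) ≤ 1 * ∑ i, (x i ^ q) ^ (p / q) :=
          mul_le_mul (rpow_le_one hγ (min_le_left _ _) hp.le)
            (rpow_sum_le_sum_rpow _ hxq (div_pos hp hq) ((div_le_one hq).2 hpq)) hS zero_le_one
      _ = ∑ i, x i ^ p := by simp only [one_mul, hpow]
  · have hγp : γ ^ p ≤ m ^ (1 - p / q) := by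
      calc γ ^ p ≤ (m ^ (1 / p - 1 / q)) ^ p := rpow_le_rpow hγ (min_le_right _ _) hp.le
        _ = m ^ (1 - p / q) := by
          rw [← rpow_mul hm.le]; congr 1; field_simp
    have hcard := rpow_sum_le_const_mul_sum_rpow_of_nonneg (s := Finset.univ)
      ((one_le_div hq).2 hqp) hxq
    simp only [hpow, Finset.card_univ] at hcard
    calc γ ^ p * (∑ i, x i ^ q) ^ (p / q)
        ≤ m ^ (1 - p / q) * (m ^ (p / q - 1) * ∑ i, x i ^ p) :=
          mul_le_mul hγp hcard hS (rpow_nonneg hm.le _)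
      _ = ∑ i, x i ^ p := by
          rw [← mul_assoc, ← rpow_add hm, sub_add_sub_cancel', sub_self, rpow_zero, one_mul]

end Real

theorem MeasureTheory.Measure.lintegral_comp_smul {E : Type*} [NormedAddCommGroup E]
    [NormedSpace ℝ E] [MeasurableSpace E] [BorelSpace E] [FiniteDimensional ℝ E]
    (μ : Measure E) [μ.IsAddHaarMeasure] (f : E → ℝ≥0∞) {c : ℝ} (hc : c ≠ 0) :
    ∫⁻ x, f (c • x) ∂μ = ENNReal.ofReal |(c ^ Module.finrank ℝ E)⁻¹| * ∫⁻ x, f x ∂μ := by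
  rw [← smul_eq_mul, ← lintegral_smul_measure, ← map_addHaar_smul μ hc]
  exact (lintegral_map_equiv f (MeasurableEquiv.smul₀ c hc)).symm

theorem atil_last (n : ℕ) (z : Fin n → ℂ) : atil n z (Fin.last n) = 1 := by
  have hmonic : (∏ i, (X - C (z i))).Monic := monic_prod_of_monic _ _ fun i _ => monic_X_sub_C (z i)
  have hdeg : (∏ i, (X - C (z i))).natDegree = n := by
    simp [natDegree_prod_of_monic _ _ fun i _ => monic_X_sub_C (z i)]
  simpa [atil, hdeg] using hmonic.coeff_natDegree

theorem one_le_sum_norm_atil_sq (n : ℕ) (z : Fin n → ℂ) : 1 ≤ ∑ k, ‖atil n z k‖ ^ 2 := by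
  simpa [atil_last] using Finset.single_le_sum (f := fun k => ‖atil n z k‖ ^ 2)
    (fun k _ => sq_nonneg _) (Finset.mem_univ (Fin.last n))

section TailBound

variable {ι : Type*} [Fintype ι] {g : ℂ → ℝ} {ρ r R : ℝ}

theorem prod_comp_mul_le_exp_mul_exp (hg_nonneg : ∀ x, 0 ≤ g x)
    (htail : ∀ x : ℂ, g x ≤ Real.exp (-r * ‖x‖ ^ ρ + R)) (hr : 0 ≤ r) {b : ι → ℂ} {c : ℝ}
    (hc : 0 ≤ c) (hcb : c ^ ρ ≤ ∑ k, ‖b k‖ ^ ρ) (a : ℂ) :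
    ∏ k, g (a * b k) ≤ Real.exp (Fintype.card ι * R) * Real.exp (-r * (c * ‖a‖) ^ ρ) := by
  calc ∏ k, g (a * b k) ≤ ∏ k, Real.exp (-r * ‖a * b k‖ ^ ρ + R) :=
        Finset.prod_le_prod (fun k _ => hg_nonneg _) (fun k _ => htail _)
    _ = Real.exp (Fintype.card ι * R - r * ‖a‖ ^ ρ * ∑ k, ‖b k‖ ^ ρ) := by
        simp_rw [← Real.exp_sum, norm_mul, Real.mul_rpow (norm_nonneg _) (norm_nonneg _),
          ← mul_assoc, Finset.sum_add_distrib, ← Finset.mul_sum]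
        rw [Finset.sum_const, Finset.card_univ, nsmul_eq_mul]
        congr 1
        ring
    _ ≤ Real.exp (Fintype.card ι * R) * Real.exp (-r * (c * ‖a‖) ^ ρ) := by
        rw [← Real.exp_add, Real.exp_le_exp, Real.mul_rpow hc (norm_nonneg _)]
        have := mul_le_mul_of_nonneg_left hcb (mul_nonneg hr (Real.rpow_nonneg (norm_nonneg a) ρ))
        linarith

theorem lintegral_mul_norm_pow_mul_prod_le (hg_nonneg : ∀ x, 0 ≤ g x)
    (htail : ∀ x : ℂ, g x ≤ Real.exp (-r * ‖x‖ ^ ρ + R)) (hr : 0 ≤ r) {b : ι → ℂ} {c : ℝ}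
    (hc : 0 < c) (hcb : c ^ ρ ≤ ∑ k, ‖b k‖ ^ ρ) {C : ℝ} (hC : 0 ≤ C) (m : ℕ) :
    ∫⁻ a : ℂ, ENNReal.ofReal (C * ‖a‖ ^ m * ∏ k, g (a * b k))
      ≤ ENNReal.ofReal (C * Real.exp (Fintype.card ι * R) * (c ^ (m + 2))⁻¹) *
        ∫⁻ u : ℂ, ENNReal.ofReal (‖u‖ ^ m * Real.exp (-r * ‖u‖ ^ ρ)) := by
  set G : ℂ → ℝ≥0∞ := fun u => ENNReal.ofReal (‖u‖ ^ m * Real.exp (-r * ‖u‖ ^ ρ))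
  set K := C * Real.exp (Fintype.card ι * R) * (c ^ m)⁻¹
  have hK : 0 ≤ K := by positivity
  have hpoint : ∀ a : ℂ, ENNReal.ofReal (C * ‖a‖ ^ m * ∏ k, g (a * b k))
      ≤ ENNReal.ofReal K * G (c • a) := fun a => by
    rw [← ENNReal.ofReal_mul hK, norm_smul, Real.norm_of_nonneg hc.le]
    refine ENNReal.ofReal_le_ofReal ?_
    calc C * ‖a‖ ^ m * ∏ k, g (a * b k)
        ≤ C * ‖a‖ ^ m * (Real.exp (Fintype.card ι * R) * Real.exp (-r * (c * ‖a‖) ^ ρ)) :=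
          mul_le_mul_of_nonneg_left (prod_comp_mul_le_exp_mul_exp hg_nonneg htail hr hc.le hcb a)
            (by positivity)
      _ = K * ((c * ‖a‖) ^ m * Real.exp (-r * (c * ‖a‖) ^ ρ)) := by
          simp only [K]
          field_simp
          ring
  calc ∫⁻ a : ℂ, ENNReal.ofReal (C * ‖a‖ ^ m * ∏ k, g (a * b k))
      ≤ ∫⁻ a : ℂ, ENNReal.ofReal K * G (c • a) := lintegral_mono hpoint
    _ = ENNReal.ofReal K * (ENNReal.ofReal (c ^ 2)⁻¹ * ∫⁻ u : ℂ, G u) := by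
        rw [lintegral_const_mul' _ _ ENNReal.ofReal_ne_top,
          Measure.lintegral_comp_smul volume G hc.ne', Complex.finrank_real_complex,
          abs_of_pos (by positivity)]
    _ = ENNReal.ofReal (C * Real.exp (Fintype.card ι * R) * (c ^ (m + 2))⁻¹) * ∫⁻ u : ℂ, G u := by
        rw [← mul_assoc, ← ENNReal.ofReal_mul hK, pow_add, mul_inv, ← mul_assoc]

end TailBound

theorem density_upper_bound_euclidean_general (ρ r R : ℝ) (hρ : 0 < ρ) (hr : 0 < r)
    (g : ℂ → ℝ) (hg_nonneg : ∀ x, 0 ≤ g x)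
    (htail : ∀ x : ℂ, g x ≤ Real.exp (-r * ‖x‖ ^ ρ + R))
    (n : ℕ) (z : Fin n → ℂ) :
    (∫⁻ a : ℂ, ENNReal.ofReal
        (vand n z * ‖a‖ ^ (2 * n) * ∏ k, g (a * atil n z k)))
      ≤ ENNReal.ofReal (Real.exp ((n + 1 : ℝ) * R) *
          ((min 1 (((n : ℝ) + 1) ^ ((1 : ℝ) / ρ - 1 / 2))) ^ (2 * n + 2))⁻¹ *
          (vand n z /
            ((∑ k, ‖atil n z k‖ ^ 2) ^ ((1 : ℝ) / 2)) ^ (2 * n + 2))) *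
        ∫⁻ u : ℂ, ENNReal.ofReal
          (‖u‖ ^ (2 * n) * Real.exp (-r * ‖u‖ ^ ρ)) := by
  set γ := min 1 (((n : ℝ) + 1) ^ ((1 : ℝ) / ρ - 1 / 2))
  set N := (∑ k, ‖atil n z k‖ ^ 2) ^ ((1 : ℝ) / 2)
  have hγ : 0 < γ := lt_min one_pos (by positivity)
  have hN : 0 < N := Real.rpow_pos_of_pos (one_pos.trans_le (one_le_sum_norm_atil_sq n z)) _
  have hcomparison : (γ * N) ^ ρ ≤ ∑ k, ‖atil n z k‖ ^ ρ := by
    have h := Real.min_one_card_rpow_mul_sum_rpow_rpow_le_sum_rpow hρ two_pos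
      fun k => norm_nonneg (atil n z k)
    simp only [Fintype.card_fin, Nat.cast_add_one, Real.rpow_two] at h
    exact h
  have hvand : 0 ≤ vand n z := Finset.prod_nonneg fun p _ => sq_nonneg _
  refine (lintegral_mul_norm_pow_mul_prod_le hg_nonneg htail hr.le (mul_pos hγ hN) hcomparison
    hvand (2 * n)).trans_eq ?_
  congr 2
  rw [Fintype.card_fin, Nat.cast_add_one, mul_pow, mul_inv]
  ring

/-- Upper bound on the density of the zeros in terms of the Euclidean norm `‖ã(z)‖₂`,
with the comparison factor `γ_n = min(1, (n+1)^{1/ρ − 1/2})`. -/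
theorem density_upper_bound_euclidean (ρ r R : ℝ) (hρ : 0 < ρ) (hr : 0 < r) (hR : 0 < R)
    (g : ℂ → ℝ) (hg_meas : Measurable g) (hg_nonneg : ∀ x, 0 ≤ g x)
    (htail : ∀ x : ℂ, g x ≤ Real.exp (-r * ‖x‖ ^ ρ + R))
    (n : ℕ) (hn : 1 ≤ n) (z : Fin n → ℂ) :
    (∫⁻ a : ℂ, ENNReal.ofReal
        (vand n z * ‖a‖ ^ (2 * n) * ∏ k, g (a * atil n z k)))
      ≤ ENNReal.ofReal (Real.exp ((n + 1 : ℝ) * R) *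
          ((min 1 (((n : ℝ) + 1) ^ ((1 : ℝ) / ρ - 1 / 2))) ^ (2 * n + 2))⁻¹ *
          (vand n z /
            ((∑ k, ‖atil n z k‖ ^ 2) ^ ((1 : ℝ) / 2)) ^ (2 * n + 2))) *
        ∫⁻ u : ℂ, ENNReal.ofReal
          (‖u‖ ^ (2 * n) * Real.exp (-r * ‖u‖ ^ ρ)) :=
  density_upper_bound_euclidean_general ρ r R hρ hr g hg_nonneg htail n z
end
end
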